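/- arXiv:2412.20778 — 2 statements merged into one kernel-verified Lean document; each statement's English description precedes it below -/
import Mathlib

section
/- Let u₁ and u₂ be classical solutions of the forward problem with source terms F₁ and F₂ respectively (same coefficients, same initial and boundary conditions). Write C₁² := (5ℓρ₀/3)(C_e² − 1) with C_e² := exp(T/ρ₀). Then the boundary slopes depend Lipschitz-continuously on the load: ∫₀^T (∂ₓu₁(0,t) − ∂ₓu₂(0,t))² dt ≤ (C₁²/r₀) ∫₀^T ∫₀^ℓ (F₁(x,t) − F₂(x,t))² dx dt, and the same bound holds at x = ℓ. -/
/-!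
Energy method. By linearity `u₁ − u₂` is a classical solution with load `F₁ − F₂`, so it
suffices to bound the boundary slopes of a single solution by its load `F`.
Multiplying the equation by `uₜ` and integrating by parts in `x` (the boundary terms vanish for a
simply supported beam, and the damping terms `μ uₜ²`, `κ uₓₓₜ²` are nonnegative) shows that
the energy `E(t) = ∫₀^ℓ ρ_A uₜ² + T_r uₓ² + r uₓₓ²` satisfies
`E(t) ≤ 2 ∫₀ᵗ∫₀^ℓ F uₜ ≤ ‖F‖² + ρ₀⁻¹ ∫₀ᵗ E` with `‖F‖² = ∫₀ᵀ∫₀^ℓ F²`, so that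
`∫₀ᵀ E ≤ ρ₀ (exp (T/ρ₀) − 1) ‖F‖²` by Grönwall.
Since `u(·, t)` vanishes at both ends, `uₓ(·, t)` has an interior zero, and Cauchy–Schwarz gives
`uₓ(0, t)², uₓ(ℓ, t)² ≤ ℓ ∫₀^ℓ uₓₓ² ≤ (ℓ / r₀) E(t)`. This proves the estimate with `ℓ` in
place of `5ℓ/3`.
-/

open Set

/-- A classical solution of the forward problem for the damped Euler–Bernoulli beam
equation `ρ_A(x) uₜₜ + μ(x) uₜ − (T_r(x) uₓ)ₓ + (r(x) uₓₓ + κ(x) uₓₓₜ)ₓₓ = F(x,t)` on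
`(0,ℓ) × (0,T)`, with homogeneous initial conditions and simply supported boundary
conditions.  The fields `ux, uxx, ut, utt, uxt, uxxt` are the partial derivatives of
`u`, `Ax` is the spatial derivative of `T_r(x) uₓ`, and `Bx, Bxx` are the first and
second spatial derivatives of the bending moment `B(x,t) = r(x) uₓₓ + κ(x) uₓₓₜ`. -/
structure ForwardSol (ℓ T : ℝ) (ρA μ Tr r κ : ℝ → ℝ) (F : ℝ → ℝ → ℝ) where
  u : ℝ → ℝ → ℝ
  ux : ℝ → ℝ → ℝ
  uxx : ℝ → ℝ → ℝ
  ut : ℝ → ℝ → ℝ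
  utt : ℝ → ℝ → ℝ
  uxt : ℝ → ℝ → ℝ
  uxxt : ℝ → ℝ → ℝ
  Ax : ℝ → ℝ → ℝ
  Bx : ℝ → ℝ → ℝ
  Bxx : ℝ → ℝ → ℝ
  smooth : ContDiffOn ℝ (⊤ : ℕ∞) (fun p : ℝ × ℝ => u p.1 p.2) (Icc 0 ℓ ×ˢ Icc 0 T)
  hux : ∀ x ∈ Icc (0:ℝ) ℓ, ∀ t ∈ Icc (0:ℝ) T, HasDerivAt (fun y => u y t) (ux x t) x
  huxx : ∀ x ∈ Icc (0:ℝ) ℓ, ∀ t ∈ Icc (0:ℝ) T, HasDerivAt (fun y => ux y t) (uxx x t) x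
  hut : ∀ x ∈ Icc (0:ℝ) ℓ, ∀ t ∈ Icc (0:ℝ) T, HasDerivAt (fun s => u x s) (ut x t) t
  hutt : ∀ x ∈ Icc (0:ℝ) ℓ, ∀ t ∈ Icc (0:ℝ) T, HasDerivAt (fun s => ut x s) (utt x t) t
  huxt : ∀ x ∈ Icc (0:ℝ) ℓ, ∀ t ∈ Icc (0:ℝ) T, HasDerivAt (fun s => ux x s) (uxt x t) t
  huxxt : ∀ x ∈ Icc (0:ℝ) ℓ, ∀ t ∈ Icc (0:ℝ) T, HasDerivAt (fun s => uxx x s) (uxxt x t) t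
  hAx : ∀ x ∈ Icc (0:ℝ) ℓ, ∀ t ∈ Icc (0:ℝ) T,
    HasDerivAt (fun y => Tr y * ux y t) (Ax x t) x
  hBx : ∀ x ∈ Icc (0:ℝ) ℓ, ∀ t ∈ Icc (0:ℝ) T,
    HasDerivAt (fun y => r y * uxx y t + κ y * uxxt y t) (Bx x t) x
  hBxx : ∀ x ∈ Icc (0:ℝ) ℓ, ∀ t ∈ Icc (0:ℝ) T, HasDerivAt (fun y => Bx y t) (Bxx x t) x
  cont_ux : ContinuousOn (fun p : ℝ × ℝ => ux p.1 p.2) (Icc 0 ℓ ×ˢ Icc 0 T)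
  cont_uxx : ContinuousOn (fun p : ℝ × ℝ => uxx p.1 p.2) (Icc 0 ℓ ×ˢ Icc 0 T)
  cont_ut : ContinuousOn (fun p : ℝ × ℝ => ut p.1 p.2) (Icc 0 ℓ ×ˢ Icc 0 T)
  cont_utt : ContinuousOn (fun p : ℝ × ℝ => utt p.1 p.2) (Icc 0 ℓ ×ˢ Icc 0 T)
  cont_uxt : ContinuousOn (fun p : ℝ × ℝ => uxt p.1 p.2) (Icc 0 ℓ ×ˢ Icc 0 T)
  cont_uxxt : ContinuousOn (fun p : ℝ × ℝ => uxxt p.1 p.2) (Icc 0 ℓ ×ˢ Icc 0 T)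
  cont_Ax : ContinuousOn (fun p : ℝ × ℝ => Ax p.1 p.2) (Icc 0 ℓ ×ˢ Icc 0 T)
  cont_Bx : ContinuousOn (fun p : ℝ × ℝ => Bx p.1 p.2) (Icc 0 ℓ ×ˢ Icc 0 T)
  cont_Bxx : ContinuousOn (fun p : ℝ × ℝ => Bxx p.1 p.2) (Icc 0 ℓ ×ˢ Icc 0 T)
  pde : ∀ x ∈ Ioo (0:ℝ) ℓ, ∀ t ∈ Ioo (0:ℝ) T,
    ρA x * utt x t + μ x * ut x t - Ax x t + Bxx x t = F x t
  init_u : ∀ x ∈ Ioo (0:ℝ) ℓ, u x 0 = 0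
  init_ut : ∀ x ∈ Ioo (0:ℝ) ℓ, ut x 0 = 0
  bc_u0 : ∀ t ∈ Icc (0:ℝ) T, u 0 t = 0
  bc_ul : ∀ t ∈ Icc (0:ℝ) T, u ℓ t = 0
  bc_m0 : ∀ t ∈ Icc (0:ℝ) T, r 0 * uxx 0 t + κ 0 * uxxt 0 t = 0
  bc_ml : ∀ t ∈ Icc (0:ℝ) T, r ℓ * uxx ℓ t + κ ℓ * uxxt ℓ t = 0

open MeasureTheory Function

section Calculus

variable {a b c d : ℝ}

lemma HasDerivWithinAt.eq_zero_of_eqOn_Icc {f : ℝ → ℝ} {f' x : ℝ}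
    (hf : HasDerivWithinAt f f' (Icc a b) x) (hab : a < b) (hx : x ∈ Icc a b)
    (h0 : ∀ y ∈ Icc a b, f y = 0) : f' = 0 :=
  (uniqueDiffOn_Icc hab x hx).eq_deriv _ hf ((hasDerivWithinAt_const x _ 0).congr h0 (h0 x hx))

lemma forall_mem_Icc_of_forall_mem_Ioo {p : ℝ → Prop} (ha : p a) (hb : p b)
    (h : ∀ x ∈ Ioo a b, p x) : ∀ x ∈ Icc a b, p x := by
  intro x hx
  rcases hx.1.eq_or_lt with rfl | hax
  · exact ha
  rcases hx.2.eq_or_lt with rfl | hxb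
  · exact hb
  exact h x ⟨hax, hxb⟩

lemma integral_eq_sub_of_hasDerivAt_of_Icc_subset {f f' : ℝ → ℝ} (hcd : c ≤ d)
    (hsub : Icc c d ⊆ Icc a b) (hf : ∀ x ∈ Icc a b, HasDerivAt f (f' x) x)
    (hf' : ContinuousOn f' (Icc a b)) : ∫ x in c..d, f' x = f d - f c :=
  intervalIntegral.integral_eq_sub_of_hasDerivAt
    (fun x hx => hf x (hsub (by rwa [uIcc_of_le hcd] at hx)))
    ((hf'.mono hsub).intervalIntegrable_of_Icc hcd)

lemma hasDerivWithinAt_intervalIntegral_Icc {g : ℝ → ℝ} (hg : ContinuousOn g (Icc a b))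
    {t : ℝ} (ht : t ∈ Icc a b) :
    HasDerivWithinAt (fun u => ∫ s in a..u, g s) (g t) (Icc a b) t := by
  have : Fact (t ∈ Icc a b) := ⟨ht⟩
  exact intervalIntegral.integral_hasDerivWithinAt_right
    ((hg.mono (Icc_subset_Icc le_rfl ht.2)).intervalIntegrable_of_Icc ht.1)
    (hg.stronglyMeasurableAtFilter_nhdsWithin measurableSet_Icc t) (hg t ht)

lemma eqOn_zero_of_forall_intervalIntegral_eq_zero {g : ℝ → ℝ} (hcd : c < d)
    (hg : ContinuousOn g (Icc c d)) (h0 : ∀ s ∈ Icc c d, ∫ σ in c..s, g σ = 0) :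
    ∀ s ∈ Icc c d, g s = 0 := fun _ hs =>
  (hasDerivWithinAt_intervalIntegral_Icc hg hs).eq_zero_of_eqOn_Icc hcd hs h0

lemma continuousOn_intervalIntegral_of_continuousOn_uncurry {g : ℝ → ℝ → ℝ}
    (hg : ContinuousOn (uncurry g) (Icc a b ×ˢ Icc c d)) {x : ℝ} (hx : x ∈ Icc a b) :
    ContinuousOn (fun s => ∫ y in a..x, g y s) (Icc c d) := by
  obtain ⟨M, hM⟩ := (isCompact_Icc.prod isCompact_Icc).exists_bound_of_continuousOn hg
  have hsub : uIoc a x ⊆ Icc a b := by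
    rw [uIoc_of_le hx.1]
    exact Ioc_subset_Icc_self.trans (Icc_subset_Icc le_rfl hx.2)
  intro s₀ hs₀
  refine intervalIntegral.continuousWithinAt_of_dominated_interval (bound := fun _ => M)
    ?_ ?_ intervalIntegrable_const ?_
  · filter_upwards [self_mem_nhdsWithin] with s hs
    exact ((hg.uncurry_right s hs).mono hsub).aestronglyMeasurable measurableSet_uIoc
  · filter_upwards [self_mem_nhdsWithin] with s hs
    exact ae_of_all _ fun y hy => hM (y, s) ⟨hsub hy, hs⟩
  · exact ae_of_all _ fun y hy => hg.uncurry_left y (hsub hy) s₀ hs₀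

lemma intervalIntegral_swap_of_continuousOn {g : ℝ → ℝ → ℝ} (hab : a ≤ b) (hcd : c ≤ d)
    (hg : ContinuousOn (uncurry g) (Icc a b ×ˢ Icc c d)) :
    ∫ x in a..b, ∫ y in c..d, g x y = ∫ y in c..d, ∫ x in a..b, g x y :=
  intervalIntegral_intervalIntegral_swap <| by
    rw [uIoc_of_le hab, uIoc_of_le hcd]
    exact (hg.integrableOn_compact (isCompact_Icc.prod isCompact_Icc)).mono_set
      (prod_mono Ioc_subset_Icc_self Ioc_subset_Icc_self)

lemma sq_intervalIntegral_le {f : ℝ → ℝ} (hab : a ≤ b) (hf : ContinuousOn f (Icc a b)) :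
    (∫ x in a..b, f x) ^ 2 ≤ (b - a) * ∫ x in a..b, f x ^ 2 := by
  rcases hab.eq_or_lt with rfl | hlt
  · simp
  have hf₁ : IntervalIntegrable f volume a b := hf.intervalIntegrable_of_Icc hab
  have hf₂ : IntervalIntegrable (f · ^ 2) volume a b := (hf.pow 2).intervalIntegrable_of_Icc hab
  obtain ⟨I, hI⟩ : ∃ I, ∫ x in a..b, f x = I := ⟨_, rfl⟩
  obtain ⟨J, hJ⟩ : ∃ J, ∫ x in a..b, f x ^ 2 = J := ⟨_, rfl⟩
  have hexpand : ∫ x in a..b, ((b - a) * f x - I) ^ 2 = (b - a) * ((b - a) * J - I ^ 2) := by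
    have hpoly : ∀ x, ((b - a) * f x - I) ^ 2
        = (b - a) ^ 2 * f x ^ 2 - 2 * (b - a) * I * f x + I ^ 2 := fun x => by ring
    simp_rw [hpoly]
    rw [intervalIntegral.integral_add ((hf₂.const_mul _).sub (hf₁.const_mul _))
        intervalIntegrable_const, intervalIntegral.integral_sub (hf₂.const_mul _) (hf₁.const_mul _),
      intervalIntegral.integral_const_mul, intervalIntegral.integral_const_mul,
      intervalIntegral.integral_const, smul_eq_mul, hI, hJ]
    ring
  have hnonneg : 0 ≤ (b - a) * ((b - a) * J - I ^ 2) :=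
    hexpand ▸ intervalIntegral.integral_nonneg hab fun x _ => sq_nonneg _
  rw [hI, hJ]
  linarith [(mul_nonneg_iff_of_pos_left (sub_pos.2 hlt)).1 hnonneg]

lemma sq_intervalIntegral_le_of_Icc_subset {f : ℝ → ℝ} (hcd : c ≤ d) (hsub : Icc c d ⊆ Icc a b)
    (hf : ContinuousOn f (Icc a b)) :
    (∫ x in c..d, f x) ^ 2 ≤ (b - a) * ∫ x in a..b, f x ^ 2 := by
  obtain ⟨hac, -⟩ := hsub ⟨le_rfl, hcd⟩
  obtain ⟨-, hdb⟩ := hsub ⟨hcd, le_rfl⟩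
  have hsq : ∫ x in c..d, f x ^ 2 ≤ ∫ x in a..b, f x ^ 2 :=
    intervalIntegral.integral_mono_interval hac hcd hdb (ae_of_all _ fun _ => sq_nonneg _)
      ((hf.pow 2).intervalIntegrable_of_Icc (hac.trans (hcd.trans hdb)))
  calc (∫ x in c..d, f x) ^ 2 ≤ (d - c) * ∫ x in c..d, f x ^ 2 :=
        sq_intervalIntegral_le hcd (hf.mono hsub)
    _ ≤ (b - a) * ∫ x in a..b, f x ^ 2 := by
        gcongr
        · exact intervalIntegral.integral_nonneg hcd fun _ _ => sq_nonneg _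
        · linarith

/-- Rolle's theorem gives an interior zero of `f'`, from which both endpoint values of `f'`
are integrals of `f''` to which Cauchy–Schwarz applies. -/
lemma sq_deriv_endpoints_le {f f' f'' : ℝ → ℝ} (hab : a < b)
    (hf : ∀ x ∈ Icc a b, HasDerivAt f (f' x) x) (hf' : ∀ x ∈ Icc a b, HasDerivAt f' (f'' x) x)
    (hf'' : ContinuousOn f'' (Icc a b)) (ha : f a = 0) (hb : f b = 0) :
    f' a ^ 2 ≤ (b - a) * ∫ x in a..b, f'' x ^ 2 ∧ f' b ^ 2 ≤ (b - a) * ∫ x in a..b, f'' x ^ 2 := by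
  obtain ⟨c, hc, hc0⟩ := exists_hasDerivAt_eq_zero hab
    (fun x hx => (hf x hx).continuousAt.continuousWithinAt) (ha.trans hb.symm)
    fun x hx => hf x (Ioo_subset_Icc_self hx)
  have hleft : Icc a c ⊆ Icc a b := Icc_subset_Icc le_rfl hc.2.le
  have hright : Icc c b ⊆ Icc a b := Icc_subset_Icc hc.1.le le_rfl
  constructor
  · calc f' a ^ 2 = (∫ x in a..c, f'' x) ^ 2 := by
          rw [integral_eq_sub_of_hasDerivAt_of_Icc_subset hc.1.le hleft hf' hf'', hc0]; ring
      _ ≤ _ := sq_intervalIntegral_le_of_Icc_subset hc.1.le hleft hf''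
  · calc f' b ^ 2 = (∫ x in c..b, f'' x) ^ 2 := by
          rw [integral_eq_sub_of_hasDerivAt_of_Icc_subset hc.2.le hright hf' hf'', hc0, sub_zero]
      _ ≤ _ := sq_intervalIntegral_le_of_Icc_subset hc.2.le hright hf''

/-- Grönwall's inequality in integral form, applied to the primitive `∫ s in a..t, g s`. -/
lemma integral_le_of_le_add_mul_integral {g : ℝ → ℝ} {D K : ℝ} (hK : K ≠ 0) (hab : a ≤ b)
    (hg : ContinuousOn g (Icc a b)) (h : ∀ t ∈ Ico a b, g t ≤ D + K * ∫ s in a..t, g s) :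
    ∫ s in a..b, g s ≤ D / K * (Real.exp (K * (b - a)) - 1) := by
  have hderiv := fun t (ht : t ∈ Icc a b) => hasDerivWithinAt_intervalIntegral_Icc hg ht
  have hbound := le_gronwallBound_of_liminf_deriv_right_le (f := fun t => ∫ s in a..t, g s)
    (δ := 0) (K := K) (ε := D)
    (fun t ht => (hderiv t ht).continuousWithinAt)
    (fun t ht r hr => ((hderiv t (Ico_subset_Icc_self ht)).mono_of_mem_nhdsWithin
      (Icc_mem_nhdsGE_of_mem ht)).liminf_right_slope_le hr)
    (by simp : ∫ s in a..a, g s ≤ 0) (fun t ht => by linarith [h t ht]) b ⟨hab, le_rfl⟩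
  simpa [gronwallBound_of_K_ne_0 hK] using hbound

lemma eq_add_intervalIntegral_of_mixed_partials {w wx wt wxt : ℝ → ℝ → ℝ} (hcd : c < d)
    (hwx : ∀ x ∈ Icc a b, ∀ t ∈ Icc c d, HasDerivAt (fun y => w y t) (wx x t) x)
    (hwt : ∀ x ∈ Icc a b, ∀ t ∈ Icc c d, HasDerivAt (fun s => w x s) (wt x t) t)
    (hwxt : ∀ x ∈ Icc a b, ∀ t ∈ Icc c d, HasDerivAt (fun s => wx x s) (wxt x t) t)
    (cwx : ContinuousOn (uncurry wx) (Icc a b ×ˢ Icc c d))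
    (cwt : ContinuousOn (uncurry wt) (Icc a b ×ˢ Icc c d))
    (cwxt : ContinuousOn (uncurry wxt) (Icc a b ×ˢ Icc c d))
    {x : ℝ} (hx : x ∈ Icc a b) {t : ℝ} (ht : t ∈ Icc c d) :
    wt x t = wt a t + ∫ y in a..x, wxt y t := by
  have ha : a ∈ Icc a b := ⟨le_rfl, hx.1.trans hx.2⟩
  have hc : c ∈ Icc c d := ⟨le_rfl, hcd.le⟩
  have hxsub : Icc a x ⊆ Icc a b := Icc_subset_Icc le_rfl hx.2
  have hG := continuousOn_intervalIntegral_of_continuousOn_uncurry cwxt hx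
  have hwt_sub : ContinuousOn (fun s => wt x s - wt a s) (Icc c d) :=
    (cwt.uncurry_left x hx).sub (cwt.uncurry_left a ha)
  -- both sides have the same primitive in time, namely `w x s - w a s`
  suffices ∀ s ∈ Icc c d, wt x s - wt a s - ∫ y in a..x, wxt y s = 0 by linarith [this t ht]
  refine eqOn_zero_of_forall_intervalIntegral_eq_zero hcd (hwt_sub.sub hG) fun s hs => ?_
  have hssub : Icc c s ⊆ Icc c d := Icc_subset_Icc le_rfl hs.2
  have htime : ∫ σ in c..s, (wt x σ - wt a σ) = (w x s - w a s) - (w x c - w a c) := by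
    rw [integral_eq_sub_of_hasDerivAt_of_Icc_subset hs.1 hssub
      (fun σ hσ => (hwt x hx σ hσ).sub (hwt a ha σ hσ)) hwt_sub]
    rfl
  have hspace : ∀ σ ∈ Icc c d, ∫ y in a..x, wx y σ = w x σ - w a σ := fun σ hσ =>
    integral_eq_sub_of_hasDerivAt_of_Icc_subset hx.1 hxsub (fun y hy => hwx y hy σ hσ)
      (cwx.uncurry_right σ hσ)
  have hmixed : ∫ σ in c..s, ∫ y in a..x, wxt y σ = ∫ y in a..x, (wx y s - wx y c) := by
    rw [← intervalIntegral_swap_of_continuousOn hx.1 hs.1 (cwxt.mono (prod_mono hxsub hssub))]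
    refine intervalIntegral.integral_congr fun y hy => ?_
    rw [uIcc_of_le hx.1] at hy
    exact integral_eq_sub_of_hasDerivAt_of_Icc_subset hs.1 hssub (hwxt y (hxsub hy))
      (cwxt.uncurry_left y (hxsub hy))
  rw [intervalIntegral.integral_sub ((hwt_sub.mono hssub).intervalIntegrable_of_Icc hs.1)
      ((hG.mono hssub).intervalIntegrable_of_Icc hs.1), htime, hmixed,
    intervalIntegral.integral_sub
      ((cwx.uncurry_right s hs).mono hxsub |>.intervalIntegrable_of_Icc hx.1)
      ((cwx.uncurry_right c hc).mono hxsub |>.intervalIntegrable_of_Icc hx.1),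
    hspace s hs, hspace c hc]
  ring

lemma hasDerivAt_of_mixed_partials {w wx wt wxt : ℝ → ℝ → ℝ} (hcd : c < d)
    (hwx : ∀ x ∈ Icc a b, ∀ t ∈ Icc c d, HasDerivAt (fun y => w y t) (wx x t) x)
    (hwt : ∀ x ∈ Icc a b, ∀ t ∈ Icc c d, HasDerivAt (fun s => w x s) (wt x t) t)
    (hwxt : ∀ x ∈ Icc a b, ∀ t ∈ Icc c d, HasDerivAt (fun s => wx x s) (wxt x t) t)
    (cwx : ContinuousOn (uncurry wx) (Icc a b ×ˢ Icc c d))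
    (cwt : ContinuousOn (uncurry wt) (Icc a b ×ˢ Icc c d))
    (cwxt : ContinuousOn (uncurry wxt) (Icc a b ×ˢ Icc c d))
    {x : ℝ} (hx : x ∈ Ioo a b) {t : ℝ} (ht : t ∈ Icc c d) :
    HasDerivAt (fun y => wt y t) (wxt x t) x := by
  have hnhds : Icc a b ∈ nhds x := Icc_mem_nhds hx.1 hx.2
  refine (((hasDerivWithinAt_intervalIntegral_Icc (cwxt.uncurry_right t ht)
    (Ioo_subset_Icc_self hx)).hasDerivAt hnhds).const_add (wt a t)).congr_of_eventuallyEq ?_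
  filter_upwards [hnhds] with y hy
  exact eq_add_intervalIntegral_of_mixed_partials hcd hwx hwt hwxt cwx cwt cwxt hy ht

end Calculus

namespace ForwardSol

variable {ℓ T : ℝ} {ρA μ Tr r κ : ℝ → ℝ} {F : ℝ → ℝ → ℝ}

def sub {F₁ F₂ : ℝ → ℝ → ℝ} (sol₁ : ForwardSol ℓ T ρA μ Tr r κ F₁)
    (sol₂ : ForwardSol ℓ T ρA μ Tr r κ F₂) :
    ForwardSol ℓ T ρA μ Tr r κ (fun x t => F₁ x t - F₂ x t) where
  u x t := sol₁.u x t - sol₂.u x t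
  ux x t := sol₁.ux x t - sol₂.ux x t
  uxx x t := sol₁.uxx x t - sol₂.uxx x t
  ut x t := sol₁.ut x t - sol₂.ut x t
  utt x t := sol₁.utt x t - sol₂.utt x t
  uxt x t := sol₁.uxt x t - sol₂.uxt x t
  uxxt x t := sol₁.uxxt x t - sol₂.uxxt x t
  Ax x t := sol₁.Ax x t - sol₂.Ax x t
  Bx x t := sol₁.Bx x t - sol₂.Bx x t
  Bxx x t := sol₁.Bxx x t - sol₂.Bxx x t
  smooth := sol₁.smooth.sub sol₂.smooth
  hux x hx t ht := (sol₁.hux x hx t ht).sub (sol₂.hux x hx t ht)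
  huxx x hx t ht := (sol₁.huxx x hx t ht).sub (sol₂.huxx x hx t ht)
  hut x hx t ht := (sol₁.hut x hx t ht).sub (sol₂.hut x hx t ht)
  hutt x hx t ht := (sol₁.hutt x hx t ht).sub (sol₂.hutt x hx t ht)
  huxt x hx t ht := (sol₁.huxt x hx t ht).sub (sol₂.huxt x hx t ht)
  huxxt x hx t ht := (sol₁.huxxt x hx t ht).sub (sol₂.huxxt x hx t ht)
  hAx x hx t ht := ((sol₁.hAx x hx t ht).sub (sol₂.hAx x hx t ht)).congr_of_eventuallyEq
    (.of_forall fun y => mul_sub _ _ _)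
  hBx x hx t ht := ((sol₁.hBx x hx t ht).sub (sol₂.hBx x hx t ht)).congr_of_eventuallyEq
    (.of_forall fun y => by simp only [Pi.sub_apply]; ring)
  hBxx x hx t ht := (sol₁.hBxx x hx t ht).sub (sol₂.hBxx x hx t ht)
  cont_ux := sol₁.cont_ux.sub sol₂.cont_ux
  cont_uxx := sol₁.cont_uxx.sub sol₂.cont_uxx
  cont_ut := sol₁.cont_ut.sub sol₂.cont_ut
  cont_utt := sol₁.cont_utt.sub sol₂.cont_utt
  cont_uxt := sol₁.cont_uxt.sub sol₂.cont_uxt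
  cont_uxxt := sol₁.cont_uxxt.sub sol₂.cont_uxxt
  cont_Ax := sol₁.cont_Ax.sub sol₂.cont_Ax
  cont_Bx := sol₁.cont_Bx.sub sol₂.cont_Bx
  cont_Bxx := sol₁.cont_Bxx.sub sol₂.cont_Bxx
  pde x hx t ht := by linear_combination sol₁.pde x hx t ht - sol₂.pde x hx t ht
  init_u x hx := by rw [sol₁.init_u x hx, sol₂.init_u x hx, sub_zero]
  init_ut x hx := by rw [sol₁.init_ut x hx, sol₂.init_ut x hx, sub_zero]
  bc_u0 t ht := by rw [sol₁.bc_u0 t ht, sol₂.bc_u0 t ht, sub_zero]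
  bc_ul t ht := by rw [sol₁.bc_ul t ht, sol₂.bc_ul t ht, sub_zero]
  bc_m0 t ht := by linear_combination sol₁.bc_m0 t ht - sol₂.bc_m0 t ht
  bc_ml t ht := by linear_combination sol₁.bc_ml t ht - sol₂.bc_ml t ht

variable (sol : ForwardSol ℓ T ρA μ Tr r κ F)

lemma ut_eq_zero_of_u_eq_zero (hT : 0 < T) {x : ℝ} (hx : x ∈ Icc 0 ℓ)
    (h : ∀ t ∈ Icc 0 T, sol.u x t = 0) : ∀ t ∈ Icc 0 T, sol.ut x t = 0 := fun t ht =>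
  (sol.hut x hx t ht).hasDerivWithinAt.eq_zero_of_eqOn_Icc hT ht h

lemma u_initial (hT : 0 ≤ T) : ∀ x ∈ Icc 0 ℓ, sol.u x 0 = 0 :=
  forall_mem_Icc_of_forall_mem_Ioo (sol.bc_u0 0 ⟨le_rfl, hT⟩) (sol.bc_ul 0 ⟨le_rfl, hT⟩)
    sol.init_u

lemma ut_initial (hℓ : 0 ≤ ℓ) (hT : 0 < T) : ∀ x ∈ Icc 0 ℓ, sol.ut x 0 = 0 :=
  forall_mem_Icc_of_forall_mem_Ioo
    (sol.ut_eq_zero_of_u_eq_zero hT ⟨le_rfl, hℓ⟩ sol.bc_u0 0 ⟨le_rfl, hT.le⟩)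
    (sol.ut_eq_zero_of_u_eq_zero hT ⟨hℓ, le_rfl⟩ sol.bc_ul 0 ⟨le_rfl, hT.le⟩) sol.init_ut

lemma ux_initial (hℓ : 0 < ℓ) (hT : 0 ≤ T) : ∀ x ∈ Icc 0 ℓ, sol.ux x 0 = 0 := fun x hx =>
  (sol.hux x hx 0 ⟨le_rfl, hT⟩).hasDerivWithinAt.eq_zero_of_eqOn_Icc hℓ hx (sol.u_initial hT)

lemma uxx_initial (hℓ : 0 < ℓ) (hT : 0 ≤ T) : ∀ x ∈ Icc 0 ℓ, sol.uxx x 0 = 0 := fun x hx =>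
  (sol.huxx x hx 0 ⟨le_rfl, hT⟩).hasDerivWithinAt.eq_zero_of_eqOn_Icc hℓ hx
    (sol.ux_initial hℓ hT)

lemma hasDerivAt_ut_left (hT : 0 < T) {x t : ℝ} (hx : x ∈ Ioo 0 ℓ) (ht : t ∈ Icc 0 T) :
    HasDerivAt (fun y => sol.ut y t) (sol.uxt x t) x :=
  hasDerivAt_of_mixed_partials hT sol.hux sol.hut sol.huxt sol.cont_ux sol.cont_ut sol.cont_uxt
    hx ht

lemma hasDerivAt_uxt_left (hT : 0 < T) {x t : ℝ} (hx : x ∈ Ioo 0 ℓ) (ht : t ∈ Icc 0 T) :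
    HasDerivAt (fun y => sol.uxt y t) (sol.uxxt x t) x :=
  hasDerivAt_of_mixed_partials hT sol.huxx sol.huxt sol.huxxt sol.cont_uxx sol.cont_uxt
    sol.cont_uxxt hx ht

def energyDensity (x t : ℝ) : ℝ :=
  ρA x * sol.ut x t ^ 2 + Tr x * sol.ux x t ^ 2 + r x * sol.uxx x t ^ 2

noncomputable def energy (t : ℝ) : ℝ := ∫ x in (0:ℝ)..ℓ, sol.energyDensity x t

def energyRate (x t : ℝ) : ℝ :=
  ρA x * (sol.utt x t * sol.ut x t) + Tr x * (sol.ux x t * sol.uxt x t)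
    + r x * (sol.uxx x t * sol.uxxt x t)

lemma hasDerivAt_energyDensity {x t : ℝ} (hx : x ∈ Icc 0 ℓ) (ht : t ∈ Icc 0 T) :
    HasDerivAt (sol.energyDensity x) (2 * sol.energyRate x t) t := by
  refine ((((sol.hutt x hx t ht).fun_pow 2).const_mul (ρA x)).add
    (((sol.huxt x hx t ht).fun_pow 2).const_mul (Tr x)) |>.add
    (((sol.huxxt x hx t ht).fun_pow 2).const_mul (r x))).congr_deriv ?_
  simp only [energyRate]
  ring

lemma energyDensity_initial (hℓ : 0 < ℓ) (hT : 0 < T) {x : ℝ} (hx : x ∈ Icc 0 ℓ) :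
    sol.energyDensity x 0 = 0 := by
  simp [energyDensity, sol.ut_initial hℓ.le hT x hx, sol.ux_initial hℓ hT.le x hx,
    sol.uxx_initial hℓ hT.le x hx]

lemma continuousOn_energyDensity (hρA : ContinuousOn ρA (Icc 0 ℓ))
    (hTr : ContinuousOn Tr (Icc 0 ℓ)) (hr : ContinuousOn r (Icc 0 ℓ)) :
    ContinuousOn (uncurry sol.energyDensity) (Icc 0 ℓ ×ˢ Icc 0 T) :=
  (((hρA.comp continuousOn_fst fun _ hp => hp.1).mul (sol.cont_ut.pow 2)).add
    ((hTr.comp continuousOn_fst fun _ hp => hp.1).mul (sol.cont_ux.pow 2))).add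
    ((hr.comp continuousOn_fst fun _ hp => hp.1).mul (sol.cont_uxx.pow 2))

lemma continuousOn_energyRate (hρA : ContinuousOn ρA (Icc 0 ℓ))
    (hTr : ContinuousOn Tr (Icc 0 ℓ)) (hr : ContinuousOn r (Icc 0 ℓ)) :
    ContinuousOn (uncurry sol.energyRate) (Icc 0 ℓ ×ˢ Icc 0 T) :=
  (((hρA.comp continuousOn_fst fun _ hp => hp.1).mul (sol.cont_utt.mul sol.cont_ut)).add
    ((hTr.comp continuousOn_fst fun _ hp => hp.1).mul (sol.cont_ux.mul sol.cont_uxt))).add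
    ((hr.comp continuousOn_fst fun _ hp => hp.1).mul (sol.cont_uxx.mul sol.cont_uxxt))

/-- The energy balance at time `s`: `F uₜ = ½ ∂ₜ(energy density) + μ uₜ² + κ uₓₓₜ² + ∂ₓΦ`,
with the flux `Φ = Bₓ uₜ − B uₓₜ − T_r uₓ uₜ` vanishing at both ends by the boundary conditions. -/
lemma exists_energy_balance (hℓ : 0 < ℓ) (hT : 0 < T) (hTr : ContinuousOn Tr (Icc 0 ℓ))
    (hr : ContinuousOn r (Icc 0 ℓ)) (hκ : ContinuousOn κ (Icc 0 ℓ)) {s : ℝ} (hs : s ∈ Ioo 0 T) :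
    ∃ Φ' : ℝ → ℝ, ContinuousOn Φ' (Icc 0 ℓ) ∧ ∫ x in (0:ℝ)..ℓ, Φ' x = 0 ∧
      ∀ x ∈ Ioo 0 ℓ, F x s * sol.ut x s
        = sol.energyRate x s + μ x * sol.ut x s ^ 2 + κ x * sol.uxxt x s ^ 2 + Φ' x := by
  have hs' := Ioo_subset_Icc_self hs
  have cut := sol.cont_ut.uncurry_right s hs'
  have cux := sol.cont_ux.uncurry_right s hs'
  have cuxx := sol.cont_uxx.uncurry_right s hs'
  have cuxt := sol.cont_uxt.uncurry_right s hs'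
  have cuxxt := sol.cont_uxxt.uncurry_right s hs'
  have cAx := sol.cont_Ax.uncurry_right s hs'
  have cBx := sol.cont_Bx.uncurry_right s hs'
  have cBxx := sol.cont_Bxx.uncurry_right s hs'
  have hut₀ : sol.ut 0 s = 0 := sol.ut_eq_zero_of_u_eq_zero hT ⟨le_rfl, hℓ.le⟩ sol.bc_u0 s hs'
  have hutℓ : sol.ut ℓ s = 0 := sol.ut_eq_zero_of_u_eq_zero hT ⟨hℓ.le, le_rfl⟩ sol.bc_ul s hs'
  refine ⟨fun x => sol.Bxx x s * sol.ut x s + sol.Bx x s * sol.uxt x s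
      - (sol.Bx x s * sol.uxt x s + (r x * sol.uxx x s + κ x * sol.uxxt x s) * sol.uxxt x s)
      - (sol.Ax x s * sol.ut x s + Tr x * sol.ux x s * sol.uxt x s), by fun_prop, ?_,
    fun x hx => ?_⟩
  · rw [intervalIntegral.integral_eq_sub_of_hasDerivAt_of_le hℓ.le
      (f := fun y => sol.Bx y s * sol.ut y s
        - (r y * sol.uxx y s + κ y * sol.uxxt y s) * sol.uxt y s - Tr y * sol.ux y s * sol.ut y s)
      (by fun_prop) (fun x hx => ?_)
      ((by fun_prop : ContinuousOn _ _).intervalIntegrable_of_Icc hℓ.le)]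
    · simp [hut₀, hutℓ, sol.bc_m0 s hs', sol.bc_ml s hs']
    have hx' := Ioo_subset_Icc_self hx
    exact (((sol.hBxx x hx' s hs').mul (sol.hasDerivAt_ut_left hT hx hs')).sub
      ((sol.hBx x hx' s hs').mul (sol.hasDerivAt_uxt_left hT hx hs'))).sub
      ((sol.hAx x hx' s hs').mul (sol.hasDerivAt_ut_left hT hx hs'))
  · rw [← sol.pde x hx s hs, energyRate]
    ring

lemma integral_energyRate_le (hℓ : 0 < ℓ) (hT : 0 < T) (hρA : ContinuousOn ρA (Icc 0 ℓ))
    (hTr : ContinuousOn Tr (Icc 0 ℓ)) (hr : ContinuousOn r (Icc 0 ℓ))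
    (hκ : ContinuousOn κ (Icc 0 ℓ)) (hμb : ∀ x ∈ Icc 0 ℓ, 0 ≤ μ x)
    (hκb : ∀ x ∈ Icc 0 ℓ, 0 ≤ κ x) (hF : ContinuousOn (uncurry F) (Icc 0 ℓ ×ˢ Icc 0 T))
    {s : ℝ} (hs : s ∈ Ioo 0 T) :
    ∫ x in (0:ℝ)..ℓ, sol.energyRate x s ≤ ∫ x in (0:ℝ)..ℓ, F x s * sol.ut x s := by
  have hs' := Ioo_subset_Icc_self hs
  obtain ⟨Φ', hΦ'c, hΦ'0, hbalance⟩ := sol.exists_energy_balance hℓ hT hTr hr hκ hs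
  have hrate : IntervalIntegrable (fun x => sol.energyRate x s) volume 0 ℓ :=
    ((sol.continuousOn_energyRate hρA hTr hr).uncurry_right s hs').intervalIntegrable_of_Icc hℓ.le
  calc ∫ x in (0:ℝ)..ℓ, sol.energyRate x s
      = (∫ x in (0:ℝ)..ℓ, sol.energyRate x s) + ∫ x in (0:ℝ)..ℓ, Φ' x := by rw [hΦ'0, add_zero]
    _ = ∫ x in (0:ℝ)..ℓ, (sol.energyRate x s + Φ' x) :=
        (intervalIntegral.integral_add hrate (hΦ'c.intervalIntegrable_of_Icc hℓ.le)).symm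
    _ ≤ ∫ x in (0:ℝ)..ℓ, F x s * sol.ut x s := by
        refine intervalIntegral.integral_mono_on_of_le_Ioo hℓ.le
          (hrate.add (hΦ'c.intervalIntegrable_of_Icc hℓ.le))
          (((hF.uncurry_right s hs').mul
            (sol.cont_ut.uncurry_right s hs')).intervalIntegrable_of_Icc hℓ.le) fun x hx => ?_
        have hx' := Ioo_subset_Icc_self hx
        rw [hbalance x hx]
        linarith [mul_nonneg (hμb x hx') (sq_nonneg (sol.ut x s)),
          mul_nonneg (hκb x hx') (sq_nonneg (sol.uxxt x s))]

lemma continuousOn_energy (hℓ : 0 ≤ ℓ) (hρA : ContinuousOn ρA (Icc 0 ℓ))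
    (hTr : ContinuousOn Tr (Icc 0 ℓ)) (hr : ContinuousOn r (Icc 0 ℓ)) :
    ContinuousOn sol.energy (Icc 0 T) :=
  continuousOn_intervalIntegral_of_continuousOn_uncurry
    (sol.continuousOn_energyDensity hρA hTr hr) ⟨hℓ, le_rfl⟩

lemma energy_eq_two_mul_integral_energyRate (hℓ : 0 < ℓ) (hT : 0 < T)
    (hρA : ContinuousOn ρA (Icc 0 ℓ)) (hTr : ContinuousOn Tr (Icc 0 ℓ))
    (hr : ContinuousOn r (Icc 0 ℓ)) {t : ℝ} (ht : t ∈ Icc 0 T) :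
    sol.energy t = 2 * ∫ s in (0:ℝ)..t, ∫ x in (0:ℝ)..ℓ, sol.energyRate x s := by
  have htsub : Icc 0 t ⊆ Icc 0 T := Icc_subset_Icc le_rfl ht.2
  have hrate := sol.continuousOn_energyRate hρA hTr hr
  rw [intervalIntegral_swap_of_continuousOn (g := fun s x => sol.energyRate x s) ht.1 hℓ.le
      (hrate.comp continuous_swap.continuousOn fun p hp => ⟨hp.2, htsub hp.1⟩),
    energy, ← intervalIntegral.integral_const_mul]
  refine intervalIntegral.integral_congr fun x hx => ?_
  rw [uIcc_of_le hℓ.le] at hx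
  rw [← intervalIntegral.integral_const_mul, integral_eq_sub_of_hasDerivAt_of_Icc_subset ht.1
      htsub (fun s hs => sol.hasDerivAt_energyDensity hx hs)
      (continuousOn_const.mul (hrate.uncurry_left x hx)),
    sol.energyDensity_initial hℓ hT hx, sub_zero]

lemma energy_le_two_mul_integral_work (hℓ : 0 < ℓ) (hT : 0 < T)
    (hρA : ContinuousOn ρA (Icc 0 ℓ)) (hTr : ContinuousOn Tr (Icc 0 ℓ))
    (hr : ContinuousOn r (Icc 0 ℓ)) (hκ : ContinuousOn κ (Icc 0 ℓ))
    (hμb : ∀ x ∈ Icc 0 ℓ, 0 ≤ μ x) (hκb : ∀ x ∈ Icc 0 ℓ, 0 ≤ κ x)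
    (hF : ContinuousOn (uncurry F) (Icc 0 ℓ ×ˢ Icc 0 T)) {t : ℝ} (ht : t ∈ Icc 0 T) :
    sol.energy t ≤ 2 * ∫ s in (0:ℝ)..t, ∫ x in (0:ℝ)..ℓ, F x s * sol.ut x s := by
  have htsub : Icc 0 t ⊆ Icc 0 T := Icc_subset_Icc le_rfl ht.2
  have hℓmem : ℓ ∈ Icc 0 ℓ := ⟨hℓ.le, le_rfl⟩
  rw [sol.energy_eq_two_mul_integral_energyRate hℓ hT hρA hTr hr ht]
  refine mul_le_mul_of_nonneg_left (intervalIntegral.integral_mono_on_of_le_Ioo ht.1 ?_ ?_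
    fun s hs => sol.integral_energyRate_le hℓ hT hρA hTr hr hκ hμb hκb hF
      ⟨hs.1, hs.2.trans_le ht.2⟩) zero_le_two
  · exact ((continuousOn_intervalIntegral_of_continuousOn_uncurry
      (sol.continuousOn_energyRate hρA hTr hr) hℓmem).mono htsub).intervalIntegrable_of_Icc ht.1
  · exact ((continuousOn_intervalIntegral_of_continuousOn_uncurry
      (g := fun x s => F x s * sol.ut x s) (hF.mul sol.cont_ut) hℓmem).mono
        htsub).intervalIntegrable_of_Icc ht.1

lemma mul_sq_ut_le_energyDensity {ρ₀ x t : ℝ} (hρA : ρ₀ ≤ ρA x) (hTr : 0 ≤ Tr x)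
    (hr : 0 ≤ r x) : ρ₀ * sol.ut x t ^ 2 ≤ sol.energyDensity x t := by
  unfold energyDensity
  linarith [mul_le_mul_of_nonneg_right hρA (sq_nonneg (sol.ut x t)),
    mul_nonneg hTr (sq_nonneg (sol.ux x t)), mul_nonneg hr (sq_nonneg (sol.uxx x t))]

lemma mul_sq_uxx_le_energyDensity {r₀ x t : ℝ} (hρA : 0 ≤ ρA x) (hTr : 0 ≤ Tr x)
    (hr : r₀ ≤ r x) : r₀ * sol.uxx x t ^ 2 ≤ sol.energyDensity x t := by
  unfold energyDensity
  linarith [mul_le_mul_of_nonneg_right hr (sq_nonneg (sol.uxx x t)),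
    mul_nonneg hTr (sq_nonneg (sol.ux x t)), mul_nonneg hρA (sq_nonneg (sol.ut x t))]

/-- Young's inequality `2 F uₜ ≤ F² + uₜ²`, and `ρ₀ uₜ²` is dominated by the energy density. -/
lemma two_mul_integral_work_le (hℓ : 0 < ℓ) {ρ₀ : ℝ} (hρ₀ : 0 < ρ₀)
    (hρA : ContinuousOn ρA (Icc 0 ℓ)) (hTr : ContinuousOn Tr (Icc 0 ℓ))
    (hr : ContinuousOn r (Icc 0 ℓ)) (hρAb : ∀ x ∈ Icc 0 ℓ, ρ₀ ≤ ρA x)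
    (hTrb : ∀ x ∈ Icc 0 ℓ, 0 ≤ Tr x) (hrb : ∀ x ∈ Icc 0 ℓ, 0 ≤ r x)
    (hF : ContinuousOn (uncurry F) (Icc 0 ℓ ×ˢ Icc 0 T)) {s : ℝ} (hs : s ∈ Icc 0 T) :
    2 * ∫ x in (0:ℝ)..ℓ, F x s * sol.ut x s
      ≤ (∫ x in (0:ℝ)..ℓ, F x s ^ 2) + ρ₀⁻¹ * sol.energy s := by
  have hFs := hF.uncurry_right s hs
  have hus := sol.cont_ut.uncurry_right s hs
  have hdens : ContinuousOn (fun x => ρ₀⁻¹ * sol.energyDensity x s) (Icc 0 ℓ) :=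
    continuousOn_const.mul ((sol.continuousOn_energyDensity hρA hTr hr).uncurry_right s hs)
  rw [energy, ← intervalIntegral.integral_const_mul, ← intervalIntegral.integral_const_mul,
    ← intervalIntegral.integral_add (f := fun x => F x s ^ 2)
      (g := fun x => ρ₀⁻¹ * sol.energyDensity x s) ((hFs.pow 2).intervalIntegrable_of_Icc hℓ.le)
      (hdens.intervalIntegrable_of_Icc hℓ.le)]
  refine intervalIntegral.integral_mono_on hℓ.le
    ((continuousOn_const.mul (hFs.mul hus)).intervalIntegrable_of_Icc hℓ.le)
    (((hFs.pow 2).add hdens).intervalIntegrable_of_Icc hℓ.le) fun x hx => ?_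
  have hut : sol.ut x s ^ 2 ≤ ρ₀⁻¹ * sol.energyDensity x s := by
    rw [le_inv_mul_iff₀ hρ₀]
    exact sol.mul_sq_ut_le_energyDensity (hρAb x hx) (hTrb x hx) (hrb x hx)
  nlinarith [sq_nonneg (F x s - sol.ut x s)]

lemma energy_le_integral_sq_load_add (hℓ : 0 < ℓ) (hT : 0 < T) {ρ₀ : ℝ} (hρ₀ : 0 < ρ₀)
    (hρA : ContinuousOn ρA (Icc 0 ℓ)) (hTr : ContinuousOn Tr (Icc 0 ℓ))
    (hr : ContinuousOn r (Icc 0 ℓ)) (hκ : ContinuousOn κ (Icc 0 ℓ))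
    (hρAb : ∀ x ∈ Icc 0 ℓ, ρ₀ ≤ ρA x) (hμb : ∀ x ∈ Icc 0 ℓ, 0 ≤ μ x)
    (hTrb : ∀ x ∈ Icc 0 ℓ, 0 ≤ Tr x) (hrb : ∀ x ∈ Icc 0 ℓ, 0 ≤ r x)
    (hκb : ∀ x ∈ Icc 0 ℓ, 0 ≤ κ x) (hF : ContinuousOn (uncurry F) (Icc 0 ℓ ×ˢ Icc 0 T))
    {t : ℝ} (ht : t ∈ Icc 0 T) :
    sol.energy t ≤ (∫ s in (0:ℝ)..T, ∫ x in (0:ℝ)..ℓ, F x s ^ 2)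
      + ρ₀⁻¹ * ∫ s in (0:ℝ)..t, sol.energy s := by
  have htsub : Icc 0 t ⊆ Icc 0 T := Icc_subset_Icc le_rfl ht.2
  have hℓmem : ℓ ∈ Icc 0 ℓ := ⟨hℓ.le, le_rfl⟩
  have hW := continuousOn_intervalIntegral_of_continuousOn_uncurry
    (g := fun x s => F x s * sol.ut x s) (hF.mul sol.cont_ut) hℓmem
  have hQ := continuousOn_intervalIntegral_of_continuousOn_uncurry
    (g := fun x s => F x s ^ 2) (hF.fun_pow 2) hℓmem
  have hE := sol.continuousOn_energy hℓ.le hρA hTr hr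
  have hQnonneg : ∀ s, 0 ≤ ∫ x in (0:ℝ)..ℓ, F x s ^ 2 := fun s =>
    intervalIntegral.integral_nonneg hℓ.le fun _ _ => sq_nonneg _
  calc sol.energy t ≤ 2 * ∫ s in (0:ℝ)..t, ∫ x in (0:ℝ)..ℓ, F x s * sol.ut x s :=
        sol.energy_le_two_mul_integral_work hℓ hT hρA hTr hr hκ hμb hκb hF ht
    _ = ∫ s in (0:ℝ)..t, 2 * ∫ x in (0:ℝ)..ℓ, F x s * sol.ut x s :=
        (intervalIntegral.integral_const_mul _ _).symm
    _ ≤ ∫ s in (0:ℝ)..t, ((∫ x in (0:ℝ)..ℓ, F x s ^ 2) + ρ₀⁻¹ * sol.energy s) :=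
        intervalIntegral.integral_mono_on ht.1
          ((continuousOn_const.mul (hW.mono htsub)).intervalIntegrable_of_Icc ht.1)
          (((hQ.mono htsub).add (continuousOn_const.mul (hE.mono htsub))).intervalIntegrable_of_Icc
            ht.1) fun s hs =>
            sol.two_mul_integral_work_le hℓ hρ₀ hρA hTr hr hρAb hTrb hrb hF (htsub hs)
    _ = (∫ s in (0:ℝ)..t, ∫ x in (0:ℝ)..ℓ, F x s ^ 2) + ρ₀⁻¹ * ∫ s in (0:ℝ)..t, sol.energy s := by
        rw [intervalIntegral.integral_add (g := fun s => ρ₀⁻¹ * sol.energy s)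
          ((hQ.mono htsub).intervalIntegrable_of_Icc ht.1)
          ((continuousOn_const.mul (hE.mono htsub)).intervalIntegrable_of_Icc ht.1),
          intervalIntegral.integral_const_mul]
    _ ≤ (∫ s in (0:ℝ)..T, ∫ x in (0:ℝ)..ℓ, F x s ^ 2) + ρ₀⁻¹ * ∫ s in (0:ℝ)..t, sol.energy s := by
        gcongr
        exact intervalIntegral.integral_mono_interval le_rfl ht.1 ht.2
          (ae_of_all _ fun s => hQnonneg s) (hQ.intervalIntegrable_of_Icc hT.le)

lemma integral_energy_le (hℓ : 0 < ℓ) (hT : 0 < T) {ρ₀ : ℝ} (hρ₀ : 0 < ρ₀)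
    (hρA : ContinuousOn ρA (Icc 0 ℓ)) (hTr : ContinuousOn Tr (Icc 0 ℓ))
    (hr : ContinuousOn r (Icc 0 ℓ)) (hκ : ContinuousOn κ (Icc 0 ℓ))
    (hρAb : ∀ x ∈ Icc 0 ℓ, ρ₀ ≤ ρA x) (hμb : ∀ x ∈ Icc 0 ℓ, 0 ≤ μ x)
    (hTrb : ∀ x ∈ Icc 0 ℓ, 0 ≤ Tr x) (hrb : ∀ x ∈ Icc 0 ℓ, 0 ≤ r x)
    (hκb : ∀ x ∈ Icc 0 ℓ, 0 ≤ κ x) (hF : ContinuousOn (uncurry F) (Icc 0 ℓ ×ˢ Icc 0 T)) :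
    ∫ t in (0:ℝ)..T, sol.energy t
      ≤ ρ₀ * (Real.exp (T / ρ₀) - 1) * ∫ s in (0:ℝ)..T, ∫ x in (0:ℝ)..ℓ, F x s ^ 2 := by
  have h := integral_le_of_le_add_mul_integral (inv_ne_zero hρ₀.ne') hT.le
    (sol.continuousOn_energy hℓ.le hρA hTr hr) fun t ht =>
      sol.energy_le_integral_sq_load_add hℓ hT hρ₀ hρA hTr hr hκ hρAb hμb hTrb hrb hκb hF
        (Ico_subset_Icc_self ht)
  rw [sub_zero, inv_mul_eq_div, div_inv_eq_mul] at h
  linarith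

lemma sq_ux_boundary_le_energy (hℓ : 0 < ℓ) {r₀ : ℝ} (hr₀ : 0 < r₀)
    (hρA : ContinuousOn ρA (Icc 0 ℓ)) (hTr : ContinuousOn Tr (Icc 0 ℓ))
    (hr : ContinuousOn r (Icc 0 ℓ)) (hρAb : ∀ x ∈ Icc 0 ℓ, 0 ≤ ρA x)
    (hTrb : ∀ x ∈ Icc 0 ℓ, 0 ≤ Tr x) (hrb : ∀ x ∈ Icc 0 ℓ, r₀ ≤ r x)
    {t : ℝ} (ht : t ∈ Icc 0 T) :
    sol.ux 0 t ^ 2 ≤ ℓ / r₀ * sol.energy t ∧ sol.ux ℓ t ^ 2 ≤ ℓ / r₀ * sol.energy t := by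
  have huxx := sol.cont_uxx.uncurry_right t ht
  have hcurv : r₀ * ∫ x in (0:ℝ)..ℓ, sol.uxx x t ^ 2 ≤ sol.energy t := by
    rw [← intervalIntegral.integral_const_mul]
    exact intervalIntegral.integral_mono_on hℓ.le
      ((continuousOn_const.mul (huxx.pow 2)).intervalIntegrable_of_Icc hℓ.le)
      (((sol.continuousOn_energyDensity hρA hTr hr).uncurry_right t ht).intervalIntegrable_of_Icc
        hℓ.le) fun x hx => sol.mul_sq_uxx_le_energyDensity (hρAb x hx) (hTrb x hx) (hrb x hx)
  have hJ : (ℓ - 0) * ∫ x in (0:ℝ)..ℓ, sol.uxx x t ^ 2 ≤ ℓ / r₀ * sol.energy t :=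
    calc (ℓ - 0) * ∫ x in (0:ℝ)..ℓ, sol.uxx x t ^ 2
        = ℓ / r₀ * (r₀ * ∫ x in (0:ℝ)..ℓ, sol.uxx x t ^ 2) := by field_simp; ring
      _ ≤ ℓ / r₀ * sol.energy t := by gcongr
  obtain ⟨h₀, hℓ'⟩ := sq_deriv_endpoints_le hℓ (fun x hx => sol.hux x hx t ht)
    (fun x hx => sol.huxx x hx t ht) huxx (sol.bc_u0 t ht) (sol.bc_ul t ht)
  exact ⟨h₀.trans hJ, hℓ'.trans hJ⟩

theorem integral_sq_ux_boundary_le (hℓ : 0 < ℓ) (hT : 0 < T) {ρ₀ r₀ : ℝ} (hρ₀ : 0 < ρ₀)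
    (hr₀ : 0 < r₀) (hρA : ContinuousOn ρA (Icc 0 ℓ)) (hTr : ContinuousOn Tr (Icc 0 ℓ))
    (hr : ContinuousOn r (Icc 0 ℓ)) (hκ : ContinuousOn κ (Icc 0 ℓ))
    (hρAb : ∀ x ∈ Icc 0 ℓ, ρ₀ ≤ ρA x) (hμb : ∀ x ∈ Icc 0 ℓ, 0 ≤ μ x)
    (hTrb : ∀ x ∈ Icc 0 ℓ, 0 ≤ Tr x) (hrb : ∀ x ∈ Icc 0 ℓ, r₀ ≤ r x)
    (hκb : ∀ x ∈ Icc 0 ℓ, 0 ≤ κ x) (hF : ContinuousOn (uncurry F) (Icc 0 ℓ ×ˢ Icc 0 T)) :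
    (∫ t in (0:ℝ)..T, sol.ux 0 t ^ 2)
        ≤ ℓ * ρ₀ * (Real.exp (T / ρ₀) - 1) / r₀ * ∫ t in (0:ℝ)..T, ∫ x in (0:ℝ)..ℓ, F x t ^ 2 ∧
      (∫ t in (0:ℝ)..T, sol.ux ℓ t ^ 2)
        ≤ ℓ * ρ₀ * (Real.exp (T / ρ₀) - 1) / r₀ * ∫ t in (0:ℝ)..T, ∫ x in (0:ℝ)..ℓ, F x t ^ 2 := by
  have hρA_nonneg : ∀ x ∈ Icc 0 ℓ, 0 ≤ ρA x := fun x hx => hρ₀.le.trans (hρAb x hx)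
  have hr_nonneg : ∀ x ∈ Icc 0 ℓ, 0 ≤ r x := fun x hx => hr₀.le.trans (hrb x hx)
  have henergy := sol.integral_energy_le hℓ hT hρ₀ hρA hTr hr hκ hρAb hμb hTrb hr_nonneg hκb hF
  have htrace := fun t (ht : t ∈ Icc 0 T) =>
    sol.sq_ux_boundary_le_energy hℓ hr₀ hρA hTr hr hρA_nonneg hTrb hrb ht
  have hbound : ∀ g : ℝ → ℝ, ContinuousOn g (Icc 0 T) →
      (∀ t ∈ Icc 0 T, g t ≤ ℓ / r₀ * sol.energy t) → ∫ t in (0:ℝ)..T, g t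
        ≤ ℓ * ρ₀ * (Real.exp (T / ρ₀) - 1) / r₀ * ∫ t in (0:ℝ)..T, ∫ x in (0:ℝ)..ℓ, F x t ^ 2 :=
    fun g hg hle => calc
      ∫ t in (0:ℝ)..T, g t ≤ ∫ t in (0:ℝ)..T, ℓ / r₀ * sol.energy t :=
        intervalIntegral.integral_mono_on hT.le (hg.intervalIntegrable_of_Icc hT.le)
          ((continuousOn_const.mul
            (sol.continuousOn_energy hℓ.le hρA hTr hr)).intervalIntegrable_of_Icc hT.le) hle
      _ = ℓ / r₀ * ∫ t in (0:ℝ)..T, sol.energy t := intervalIntegral.integral_const_mul _ _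
      _ ≤ ℓ / r₀ * (ρ₀ * (Real.exp (T / ρ₀) - 1)
          * ∫ s in (0:ℝ)..T, ∫ x in (0:ℝ)..ℓ, F x s ^ 2) := by
        gcongr
      _ = _ := by ring
  exact ⟨hbound _ ((sol.cont_ux.uncurry_left 0 (left_mem_Icc.2 hℓ.le)).pow 2)
      fun t ht => (htrace t ht).1,
    hbound _ ((sol.cont_ux.uncurry_left ℓ (right_mem_Icc.2 hℓ.le)).pow 2)
      fun t ht => (htrace t ht).2⟩

end ForwardSol

theorem boundary_slopes_lipschitz_in_load_general
    (ℓ T ρ₀ r₀ κ₀ : ℝ) (hℓ : 0 < ℓ) (hT : 0 < T)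
    (hρ₀ : 0 < ρ₀) (hr₀ : 0 < r₀) (hκ₀ : 0 < κ₀)
    (ρA μ Tr r κ : ℝ → ℝ) (F₁ F₂ : ℝ → ℝ → ℝ)
    (hρA : ContDiffOn ℝ (⊤ : ℕ∞) ρA (Icc 0 ℓ))
    (hTr : ContDiffOn ℝ (⊤ : ℕ∞) Tr (Icc 0 ℓ))
    (hr : ContDiffOn ℝ (⊤ : ℕ∞) r (Icc 0 ℓ))
    (hκ : ContDiffOn ℝ (⊤ : ℕ∞) κ (Icc 0 ℓ))
    (hρAb : ∀ x ∈ Icc (0:ℝ) ℓ, ρ₀ ≤ ρA x)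
    (hμb : ∀ x ∈ Icc (0:ℝ) ℓ, 0 ≤ μ x)
    (hTrb : ∀ x ∈ Icc (0:ℝ) ℓ, 0 ≤ Tr x)
    (hrb : ∀ x ∈ Icc (0:ℝ) ℓ, r₀ ≤ r x)
    (hκb : ∀ x ∈ Icc (0:ℝ) ℓ, κ₀ ≤ κ x)
    (hF₁ : ContinuousOn (fun p : ℝ × ℝ => F₁ p.1 p.2) (Icc 0 ℓ ×ˢ Icc 0 T))
    (hF₂ : ContinuousOn (fun p : ℝ × ℝ => F₂ p.1 p.2) (Icc 0 ℓ ×ˢ Icc 0 T))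
    (sol₁ : ForwardSol ℓ T ρA μ Tr r κ F₁)
    (sol₂ : ForwardSol ℓ T ρA μ Tr r κ F₂) :
    (∫ t in (0:ℝ)..T, (sol₁.ux 0 t - sol₂.ux 0 t) ^ 2)
      ≤ (5 * ℓ * ρ₀ / 3) * (Real.exp (T / ρ₀) - 1) / r₀ * (∫ t in (0:ℝ)..T, ∫ x in (0:ℝ)..ℓ, (F₁ x t - F₂ x t) ^ 2) ∧
    (∫ t in (0:ℝ)..T, (sol₁.ux ℓ t - sol₂.ux ℓ t) ^ 2)
      ≤ (5 * ℓ * ρ₀ / 3) * (Real.exp (T / ρ₀) - 1) / r₀ * (∫ t in (0:ℝ)..T, ∫ x in (0:ℝ)..ℓ, (F₁ x t - F₂ x t) ^ 2) := by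
  obtain ⟨h₀, hℓ'⟩ := (sol₁.sub sol₂).integral_sq_ux_boundary_le hℓ hT hρ₀ hr₀ hρA.continuousOn
    hTr.continuousOn hr.continuousOn hκ.continuousOn hρAb hμb hTrb hrb
    (fun x hx => hκ₀.le.trans (hκb x hx)) (hF₁.sub hF₂)
  have hload : 0 ≤ ∫ t in (0:ℝ)..T, ∫ x in (0:ℝ)..ℓ, (F₁ x t - F₂ x t) ^ 2 :=
    intervalIntegral.integral_nonneg hT.le fun _ _ =>
      intervalIntegral.integral_nonneg hℓ.le fun _ _ => sq_nonneg _
  have hconst : ℓ * ρ₀ * (Real.exp (T / ρ₀) - 1) / r₀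
      ≤ (5 * ℓ * ρ₀ / 3) * (Real.exp (T / ρ₀) - 1) / r₀ := by
    have := Real.one_le_exp (div_pos hT hρ₀).le
    gcongr
    linarith [mul_pos hℓ hρ₀]
  exact ⟨h₀.trans (mul_le_mul_of_nonneg_right hconst hload),
    hℓ'.trans (mul_le_mul_of_nonneg_right hconst hload)⟩

/-- **Lipschitz continuity of the input-output operators (Lemma 2)** at the level of
classical solutions, with `C₁² = (5ℓρ₀/3)(C_e² − 1)` and `C_e² = exp(T/ρ₀)`. -/
theorem boundary_slopes_lipschitz_in_load
    (ℓ T ρ₀ r₀ κ₀ : ℝ) (hℓ : 0 < ℓ) (hT : 0 < T)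
    (hρ₀ : 0 < ρ₀) (hr₀ : 0 < r₀) (hκ₀ : 0 < κ₀)
    (ρA μ Tr r κ : ℝ → ℝ) (F₁ F₂ : ℝ → ℝ → ℝ)
    (hρA : ContDiffOn ℝ (⊤ : ℕ∞) ρA (Icc 0 ℓ))
    (hμ : ContDiffOn ℝ (⊤ : ℕ∞) μ (Icc 0 ℓ))
    (hTr : ContDiffOn ℝ (⊤ : ℕ∞) Tr (Icc 0 ℓ))
    (hr : ContDiffOn ℝ (⊤ : ℕ∞) r (Icc 0 ℓ))
    (hκ : ContDiffOn ℝ (⊤ : ℕ∞) κ (Icc 0 ℓ))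
    (hρAb : ∀ x ∈ Icc (0:ℝ) ℓ, ρ₀ ≤ ρA x)
    (hμb : ∀ x ∈ Icc (0:ℝ) ℓ, 0 ≤ μ x)
    (hTrb : ∀ x ∈ Icc (0:ℝ) ℓ, 0 ≤ Tr x)
    (hrb : ∀ x ∈ Icc (0:ℝ) ℓ, r₀ ≤ r x)
    (hκb : ∀ x ∈ Icc (0:ℝ) ℓ, κ₀ ≤ κ x)
    (hF₁ : ContinuousOn (fun p : ℝ × ℝ => F₁ p.1 p.2) (Icc 0 ℓ ×ˢ Icc 0 T))
    (hF₂ : ContinuousOn (fun p : ℝ × ℝ => F₂ p.1 p.2) (Icc 0 ℓ ×ˢ Icc 0 T))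
    (sol₁ : ForwardSol ℓ T ρA μ Tr r κ F₁)
    (sol₂ : ForwardSol ℓ T ρA μ Tr r κ F₂) :
    (∫ t in (0:ℝ)..T, (sol₁.ux 0 t - sol₂.ux 0 t) ^ 2)
      ≤ (5 * ℓ * ρ₀ / 3) * (Real.exp (T / ρ₀) - 1) / r₀ * (∫ t in (0:ℝ)..T, ∫ x in (0:ℝ)..ℓ, (F₁ x t - F₂ x t) ^ 2) ∧
    (∫ t in (0:ℝ)..T, (sol₁.ux ℓ t - sol₂.ux ℓ t) ^ 2)
      ≤ (5 * ℓ * ρ₀ / 3) * (Real.exp (T / ρ₀) - 1) / r₀ * (∫ t in (0:ℝ)..T, ∫ x in (0:ℝ)..ℓ, (F₁ x t - F₂ x t) ^ 2) :=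
  boundary_slopes_lipschitz_in_load_general ℓ T ρ₀ r₀ κ₀ hℓ hT hρ₀ hr₀ hκ₀ ρA μ Tr r κ F₁ F₂ hρA hTr
    hr hκ hρAb hμb hTrb hrb hκb hF₁ hF₂ sol₁ sol₂
end

section
/- Let u be a classical solution of the forward problem with source δF, and let φ be a classical solution of the backward (adjoint-type) problem with boundary inputs p and q. Then the integral relationship of Lemma 4 holds: ∫₀^T p(t) ∂ₓu(0,t) dt + ∫₀^T q(t) ∂ₓu(ℓ,t) dt = ∫₀^T ∫₀^ℓ δF(x,t) φ(x,t) dx dt. -/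
/-!
Multiplying the forward equation by `φ`, the backward one by `u` and subtracting gives the
Lagrange identity `δF φ = ∂ₜ P + ∂ₓ Q` for two explicit bilinear fluxes `P = timeFlux` and
`Q = spaceFlux`, obtained by moving every derivative off `u` and `φ` onto products. Integrating
it over the rectangle, `P` vanishes at `t = 0` and `t = T` by the initial and final conditions
(which also force `uₓₓ(·,0) = 0` and `φₓₓ(·,T) = 0`), while the Dirichlet and moment boundary
conditions reduce `Q` at `x = 0` and `x = ℓ` to `-p uₓ(0,·)` and `q uₓ(ℓ,·)`.
-/

open Set

/-- A classical solution of the backward (adjoint-type) problem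
`ρ_A(x) φₜₜ − μ(x) φₜ − (T_r(x) φₓ)ₓ + (r(x) φₓₓ − κ(x) φₓₓₜ)ₓₓ = 0` on `(0,ℓ) × (0,T)`,
with homogeneous final conditions at `t = T`, Dirichlet boundary conditions
`φ(0,t) = φ(ℓ,t) = 0`, and moment boundary inputs
`−(r φₓₓ − κ φₓₓₜ)|ₓ₌₀ = p(t)`, `(r φₓₓ − κ φₓₓₜ)|ₓ₌ℓ = q(t)`.  The fields
`Dx` and `Cx, Cxx` are the spatial derivatives of `T_r(x) φₓ` and of
`C(x,t) = r(x) φₓₓ − κ(x) φₓₓₜ`, respectively. -/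
structure BackwardSol (ℓ T : ℝ) (ρA μ Tr r κ : ℝ → ℝ) (p q : ℝ → ℝ) where
  φ : ℝ → ℝ → ℝ
  φx : ℝ → ℝ → ℝ
  φxx : ℝ → ℝ → ℝ
  φt : ℝ → ℝ → ℝ
  φtt : ℝ → ℝ → ℝ
  φxxt : ℝ → ℝ → ℝ
  Dx : ℝ → ℝ → ℝ
  Cx : ℝ → ℝ → ℝ
  Cxx : ℝ → ℝ → ℝ
  smooth : ContDiffOn ℝ (⊤ : ℕ∞) (fun p : ℝ × ℝ => φ p.1 p.2) (Icc 0 ℓ ×ˢ Icc 0 T)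
  hφx : ∀ x ∈ Icc (0:ℝ) ℓ, ∀ t ∈ Icc (0:ℝ) T, HasDerivAt (fun y => φ y t) (φx x t) x
  hφxx : ∀ x ∈ Icc (0:ℝ) ℓ, ∀ t ∈ Icc (0:ℝ) T, HasDerivAt (fun y => φx y t) (φxx x t) x
  hφt : ∀ x ∈ Icc (0:ℝ) ℓ, ∀ t ∈ Icc (0:ℝ) T, HasDerivAt (fun s => φ x s) (φt x t) t
  hφtt : ∀ x ∈ Icc (0:ℝ) ℓ, ∀ t ∈ Icc (0:ℝ) T, HasDerivAt (fun s => φt x s) (φtt x t) t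
  hφxxt : ∀ x ∈ Icc (0:ℝ) ℓ, ∀ t ∈ Icc (0:ℝ) T, HasDerivAt (fun s => φxx x s) (φxxt x t) t
  hDx : ∀ x ∈ Icc (0:ℝ) ℓ, ∀ t ∈ Icc (0:ℝ) T,
    HasDerivAt (fun y => Tr y * φx y t) (Dx x t) x
  hCx : ∀ x ∈ Icc (0:ℝ) ℓ, ∀ t ∈ Icc (0:ℝ) T,
    HasDerivAt (fun y => r y * φxx y t - κ y * φxxt y t) (Cx x t) x
  hCxx : ∀ x ∈ Icc (0:ℝ) ℓ, ∀ t ∈ Icc (0:ℝ) T, HasDerivAt (fun y => Cx y t) (Cxx x t) x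
  cont_φx : ContinuousOn (fun p : ℝ × ℝ => φx p.1 p.2) (Icc 0 ℓ ×ˢ Icc 0 T)
  cont_φxx : ContinuousOn (fun p : ℝ × ℝ => φxx p.1 p.2) (Icc 0 ℓ ×ˢ Icc 0 T)
  cont_φt : ContinuousOn (fun p : ℝ × ℝ => φt p.1 p.2) (Icc 0 ℓ ×ˢ Icc 0 T)
  cont_φtt : ContinuousOn (fun p : ℝ × ℝ => φtt p.1 p.2) (Icc 0 ℓ ×ˢ Icc 0 T)
  cont_φxxt : ContinuousOn (fun p : ℝ × ℝ => φxxt p.1 p.2) (Icc 0 ℓ ×ˢ Icc 0 T)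
  cont_Dx : ContinuousOn (fun p : ℝ × ℝ => Dx p.1 p.2) (Icc 0 ℓ ×ˢ Icc 0 T)
  cont_Cx : ContinuousOn (fun p : ℝ × ℝ => Cx p.1 p.2) (Icc 0 ℓ ×ˢ Icc 0 T)
  cont_Cxx : ContinuousOn (fun p : ℝ × ℝ => Cxx p.1 p.2) (Icc 0 ℓ ×ˢ Icc 0 T)
  pde : ∀ x ∈ Ioo (0:ℝ) ℓ, ∀ t ∈ Ioo (0:ℝ) T,
    ρA x * φtt x t - μ x * φt x t - Dx x t + Cxx x t = 0
  final_φ : ∀ x ∈ Ioo (0:ℝ) ℓ, φ x T = 0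
  final_φt : ∀ x ∈ Ioo (0:ℝ) ℓ, φt x T = 0
  bc_φ0 : ∀ t ∈ Icc (0:ℝ) T, φ 0 t = 0
  bc_φl : ∀ t ∈ Icc (0:ℝ) T, φ ℓ t = 0
  bc_m0 : ∀ t ∈ Icc (0:ℝ) T, -(r 0 * φxx 0 t - κ 0 * φxxt 0 t) = p t
  bc_ml : ∀ t ∈ Icc (0:ℝ) T, r ℓ * φxx ℓ t - κ ℓ * φxxt ℓ t = q t

open MeasureTheory Function

theorem ContinuousOn.comp_fst_prod {α β γ : Type*} [TopologicalSpace α] [TopologicalSpace β]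
    [TopologicalSpace γ] {f : α → γ} {s : Set α} (hf : ContinuousOn f s) (t : Set β) :
    ContinuousOn (fun z : α × β => f z.1) (s ×ˢ t) :=
  hf.comp continuousOn_fst fun _ hz => hz.1

section RectangleIntegrals

variable {a b c d : ℝ}

theorem ContinuousOn.integrable_restrict_Ioc_prod {F : ℝ → ℝ → ℝ}
    (hF : ContinuousOn (uncurry F) (Icc a b ×ˢ Icc c d)) :
    Integrable (uncurry F) ((volume.restrict (Ioc a b)).prod (volume.restrict (Ioc c d))) := by
  rw [Measure.prod_restrict, ← Measure.volume_eq_prod]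
  exact (hF.integrableOn_compact (isCompact_Icc.prod isCompact_Icc)).mono_set
    (prod_mono Ioc_subset_Icc_self Ioc_subset_Icc_self)

theorem ContinuousOn.intervalIntegrable_intervalIntegral {F : ℝ → ℝ → ℝ} (hab : a ≤ b)
    (hcd : c ≤ d) (hF : ContinuousOn (uncurry F) (Icc a b ×ˢ Icc c d)) :
    IntervalIntegrable (fun t => ∫ x in a..b, F x t) volume c d := by
  rw [intervalIntegrable_iff_integrableOn_Ioc_of_le hcd]
  simp only [intervalIntegral.integral_of_le hab]
  exact hF.integrable_restrict_Ioc_prod.integral_prod_right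

theorem ContinuousOn.intervalIntegral_comm {F : ℝ → ℝ → ℝ} (hab : a ≤ b) (hcd : c ≤ d)
    (hF : ContinuousOn (uncurry F) (Icc a b ×ˢ Icc c d)) :
    ∫ t in c..d, ∫ x in a..b, F x t = ∫ x in a..b, ∫ t in c..d, F x t := by
  simp only [intervalIntegral.integral_of_le hab, intervalIntegral.integral_of_le hcd]
  exact (integral_integral_swap hF.integrable_restrict_Ioc_prod).symm

theorem integral_integral_add_eq_of_hasDerivAt {P Q P' Q' : ℝ → ℝ → ℝ} (hab : a ≤ b)
    (hcd : c ≤ d) (hP : ∀ x ∈ Icc a b, ∀ t ∈ Icc c d, HasDerivAt (P x) (P' x t) t)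
    (hQ : ∀ x ∈ Icc a b, ∀ t ∈ Icc c d, HasDerivAt (fun y => Q y t) (Q' x t) x)
    (hP' : ContinuousOn (uncurry P') (Icc a b ×ˢ Icc c d))
    (hQ' : ContinuousOn (uncurry Q') (Icc a b ×ˢ Icc c d)) :
    ∫ t in c..d, ∫ x in a..b, (P' x t + Q' x t)
      = (∫ x in a..b, (P x d - P x c)) + ∫ t in c..d, (Q b t - Q a t) := by
  have inner_add : ∀ t ∈ uIcc c d, ∫ x in a..b, (P' x t + Q' x t)
      = (∫ x in a..b, P' x t) + ∫ x in a..b, Q' x t := by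
    intro t ht
    rw [uIcc_of_le hcd] at ht
    exact intervalIntegral.integral_add
      ((hP'.uncurry_right t ht).intervalIntegrable_of_Icc hab)
      ((hQ'.uncurry_right t ht).intervalIntegrable_of_Icc hab)
  have ftc_t : ∀ x ∈ uIcc a b, ∫ t in c..d, P' x t = P x d - P x c := by
    intro x hx
    rw [uIcc_of_le hab] at hx
    refine intervalIntegral.integral_eq_sub_of_hasDerivAt (fun t ht => hP x hx t ?_)
      ((hP'.uncurry_left x hx).intervalIntegrable_of_Icc hcd)
    rwa [uIcc_of_le hcd] at ht
  have ftc_x : ∀ t ∈ uIcc c d, ∫ x in a..b, Q' x t = Q b t - Q a t := by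
    intro t ht
    rw [uIcc_of_le hcd] at ht
    refine intervalIntegral.integral_eq_sub_of_hasDerivAt (fun x hx => hQ x ?_ t ht)
      ((hQ'.uncurry_right t ht).intervalIntegrable_of_Icc hab)
    rwa [uIcc_of_le hab] at hx
  rw [intervalIntegral.integral_congr inner_add, intervalIntegral.integral_add
      (hP'.intervalIntegrable_intervalIntegral hab hcd)
      (hQ'.intervalIntegrable_intervalIntegral hab hcd),
    hP'.intervalIntegral_comm hab hcd, intervalIntegral.integral_congr ftc_t,
    intervalIntegral.integral_congr ftc_x]

end RectangleIntegrals

theorem HasDerivAt.eq_zero_of_forall_mem_Ioo {f : ℝ → ℝ} {f' a b x : ℝ}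
    (hf : HasDerivAt f f' x) (hx : x ∈ Ioo a b) (h : ∀ y ∈ Ioo a b, f y = 0) : f' = 0 :=
  hf.unique <| (hasDerivAt_const x 0).congr_of_eventuallyEq <|
    Filter.eventually_of_mem (Ioo_mem_nhds hx.1 hx.2) h

theorem ForwardSol.uxx_initial_s19 {ℓ T : ℝ} {ρA μ Tr r κ : ℝ → ℝ} {F : ℝ → ℝ → ℝ}
    (sol : ForwardSol ℓ T ρA μ Tr r κ F) (hT : 0 ≤ T) : ∀ x ∈ Ioo (0:ℝ) ℓ, sol.uxx x 0 = 0 := by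
  have h0 : (0:ℝ) ∈ Icc 0 T := ⟨le_rfl, hT⟩
  have ux_initial : ∀ x ∈ Ioo (0:ℝ) ℓ, sol.ux x 0 = 0 := fun x hx =>
    (sol.hux x (Ioo_subset_Icc_self hx) 0 h0).eq_zero_of_forall_mem_Ioo hx sol.init_u
  exact fun x hx =>
    (sol.huxx x (Ioo_subset_Icc_self hx) 0 h0).eq_zero_of_forall_mem_Ioo hx ux_initial

theorem BackwardSol.φxx_final {ℓ T : ℝ} {ρA μ Tr r κ : ℝ → ℝ} {p q : ℝ → ℝ}
    (adj : BackwardSol ℓ T ρA μ Tr r κ p q) (hT : 0 ≤ T) : ∀ x ∈ Ioo (0:ℝ) ℓ, adj.φxx x T = 0 := by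
  have hTT : T ∈ Icc 0 T := ⟨hT, le_rfl⟩
  have φx_final : ∀ x ∈ Ioo (0:ℝ) ℓ, adj.φx x T = 0 := fun x hx =>
    (adj.hφx x (Ioo_subset_Icc_self hx) T hTT).eq_zero_of_forall_mem_Ioo hx adj.final_φ
  exact fun x hx =>
    (adj.hφxx x (Ioo_subset_Icc_self hx) T hTT).eq_zero_of_forall_mem_Ioo hx φx_final

section LagrangeIdentity

variable {ℓ T : ℝ} {ρA μ Tr r κ : ℝ → ℝ} {F : ℝ → ℝ → ℝ} {p q : ℝ → ℝ}
  (sol : ForwardSol ℓ T ρA μ Tr r κ F) (adj : BackwardSol ℓ T ρA μ Tr r κ p q)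

def timeFlux (x t : ℝ) : ℝ :=
  ρA x * (sol.ut x t * adj.φ x t - sol.u x t * adj.φt x t) + μ x * (sol.u x t * adj.φ x t)
    + κ x * (sol.uxx x t * adj.φxx x t)

def timeFluxDt (x t : ℝ) : ℝ :=
  ρA x * (sol.utt x t * adj.φ x t - sol.u x t * adj.φtt x t)
    + μ x * (sol.ut x t * adj.φ x t + sol.u x t * adj.φt x t)
    + κ x * (sol.uxxt x t * adj.φxx x t + sol.uxx x t * adj.φxxt x t)

def spaceFlux (x t : ℝ) : ℝ :=
  -(Tr x * sol.ux x t * adj.φ x t) + Tr x * adj.φx x t * sol.u x t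
    + sol.Bx x t * adj.φ x t - adj.Cx x t * sol.u x t
    - (r x * sol.uxx x t + κ x * sol.uxxt x t) * adj.φx x t
    + (r x * adj.φxx x t - κ x * adj.φxxt x t) * sol.ux x t

def spaceFluxDx (x t : ℝ) : ℝ :=
  -(sol.Ax x t * adj.φ x t) + adj.Dx x t * sol.u x t
    + sol.Bxx x t * adj.φ x t - adj.Cxx x t * sol.u x t
    - (r x * sol.uxx x t + κ x * sol.uxxt x t) * adj.φxx x t
    + (r x * adj.φxx x t - κ x * adj.φxxt x t) * sol.uxx x t

theorem timeFluxDt_add_spaceFluxDx : ∀ x ∈ Ioo (0:ℝ) ℓ, ∀ t ∈ Ioo (0:ℝ) T,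
    timeFluxDt sol adj x t + spaceFluxDx sol adj x t = F x t * adj.φ x t := by
  intro x hx t ht
  rw [timeFluxDt, spaceFluxDx]
  linear_combination adj.φ x t * sol.pde x hx t ht - sol.u x t * adj.pde x hx t ht

theorem hasDerivAt_timeFlux : ∀ x ∈ Icc (0:ℝ) ℓ, ∀ t ∈ Icc (0:ℝ) T,
    HasDerivAt (timeFlux sol adj x) (timeFluxDt sol adj x t) t := by
  intro x hx t ht
  have H := ((((sol.hutt x hx t ht).mul (adj.hφt x hx t ht)).sub
      ((sol.hut x hx t ht).mul (adj.hφtt x hx t ht))).const_mul (ρA x)).add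
    (((sol.hut x hx t ht).mul (adj.hφt x hx t ht)).const_mul (μ x)) |>.add
    (((sol.huxxt x hx t ht).mul (adj.hφxxt x hx t ht)).const_mul (κ x))
  refine H.congr_deriv ?_
  simp only [timeFluxDt]
  ring

theorem hasDerivAt_spaceFlux : ∀ x ∈ Icc (0:ℝ) ℓ, ∀ t ∈ Icc (0:ℝ) T,
    HasDerivAt (fun y => spaceFlux sol adj y t) (spaceFluxDx sol adj x t) x := by
  intro x hx t ht
  have H := (((((sol.hAx x hx t ht).mul (adj.hφx x hx t ht)).neg.add
      ((adj.hDx x hx t ht).mul (sol.hux x hx t ht))).add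
      ((sol.hBxx x hx t ht).mul (adj.hφx x hx t ht))).sub
      ((adj.hCxx x hx t ht).mul (sol.hux x hx t ht))).sub
      ((sol.hBx x hx t ht).mul (adj.hφxx x hx t ht)) |>.add
      ((adj.hCx x hx t ht).mul (sol.huxx x hx t ht))
  refine H.congr_deriv ?_
  simp only [spaceFluxDx]
  ring

variable {sol adj}

theorem continuousOn_timeFluxDt (hρA : ContinuousOn ρA (Icc 0 ℓ))
    (hμ : ContinuousOn μ (Icc 0 ℓ)) (hκ : ContinuousOn κ (Icc 0 ℓ)) :
    ContinuousOn (uncurry (timeFluxDt sol adj)) (Icc 0 ℓ ×ˢ Icc 0 T) := by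
  have cu := sol.smooth.continuousOn
  have cφ := adj.smooth.continuousOn
  have cρA := hρA.comp_fst_prod (Icc 0 T)
  have cμ := hμ.comp_fst_prod (Icc 0 T)
  have cκ := hκ.comp_fst_prod (Icc 0 T)
  exact ((cρA.mul ((sol.cont_utt.mul cφ).sub (cu.mul adj.cont_φtt))).add
    (cμ.mul ((sol.cont_ut.mul cφ).add (cu.mul adj.cont_φt)))).add
    (cκ.mul ((sol.cont_uxxt.mul adj.cont_φxx).add (sol.cont_uxx.mul adj.cont_φxxt)))

theorem continuousOn_spaceFluxDx (hr : ContinuousOn r (Icc 0 ℓ))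
    (hκ : ContinuousOn κ (Icc 0 ℓ)) :
    ContinuousOn (uncurry (spaceFluxDx sol adj)) (Icc 0 ℓ ×ˢ Icc 0 T) := by
  have cu := sol.smooth.continuousOn
  have cφ := adj.smooth.continuousOn
  have cr := hr.comp_fst_prod (Icc 0 T)
  have cκ := hκ.comp_fst_prod (Icc 0 T)
  exact (((((sol.cont_Ax.mul cφ).neg.add (adj.cont_Dx.mul cu)).add
    (sol.cont_Bxx.mul cφ)).sub (adj.cont_Cxx.mul cu)).sub
    (((cr.mul sol.cont_uxx).add (cκ.mul sol.cont_uxxt)).mul adj.cont_φxx)).add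
    (((cr.mul adj.cont_φxx).sub (cκ.mul adj.cont_φxxt)).mul sol.cont_uxx)

theorem timeFlux_final_sub_initial (hT : 0 ≤ T) :
    ∀ x ∈ Ioo (0:ℝ) ℓ, timeFlux sol adj x T - timeFlux sol adj x 0 = 0 := by
  intro x hx
  simp only [timeFlux]
  rw [sol.init_u x hx, sol.init_ut x hx, sol.uxx_initial_s19 hT x hx, adj.final_φ x hx,
    adj.final_φt x hx, adj.φxx_final hT x hx]
  ring

theorem spaceFlux_left : ∀ t ∈ Icc (0:ℝ) T, spaceFlux sol adj 0 t = -(p t * sol.ux 0 t) := by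
  intro t ht
  simp only [spaceFlux]
  rw [adj.bc_φ0 t ht, sol.bc_u0 t ht]
  linear_combination -adj.φx 0 t * sol.bc_m0 t ht - sol.ux 0 t * adj.bc_m0 t ht

theorem spaceFlux_right : ∀ t ∈ Icc (0:ℝ) T, spaceFlux sol adj ℓ t = q t * sol.ux ℓ t := by
  intro t ht
  simp only [spaceFlux]
  rw [adj.bc_φl t ht, sol.bc_ul t ht]
  linear_combination -adj.φx ℓ t * sol.bc_ml t ht + sol.ux ℓ t * adj.bc_ml t ht

end LagrangeIdentity

theorem adjoint_integral_relationship_general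
    (ℓ T : ℝ) (hℓ : 0 < ℓ) (hT : 0 < T)
    (ρA μ Tr r κ : ℝ → ℝ) (δF : ℝ → ℝ → ℝ) (p q : ℝ → ℝ)
    (hρA : ContDiffOn ℝ (⊤ : ℕ∞) ρA (Icc 0 ℓ))
    (hμ : ContDiffOn ℝ (⊤ : ℕ∞) μ (Icc 0 ℓ))
    (hr : ContDiffOn ℝ (⊤ : ℕ∞) r (Icc 0 ℓ))
    (hκ : ContDiffOn ℝ (⊤ : ℕ∞) κ (Icc 0 ℓ))
    (hp : ContinuousOn p (Icc (0:ℝ) T))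
    (hq : ContinuousOn q (Icc (0:ℝ) T))
    (sol : ForwardSol ℓ T ρA μ Tr r κ δF)
    (adj : BackwardSol ℓ T ρA μ Tr r κ p q) :
    (∫ t in (0:ℝ)..T, p t * sol.ux 0 t) + (∫ t in (0:ℝ)..T, q t * sol.ux ℓ t)
      = ∫ t in (0:ℝ)..T, ∫ x in (0:ℝ)..ℓ, δF x t * adj.φ x t := by
  have ux_left : ContinuousOn (sol.ux 0) (Icc 0 T) :=
    sol.cont_ux.uncurry_left (f := sol.ux) 0 (left_mem_Icc.2 hℓ.le)
  have ux_right : ContinuousOn (sol.ux ℓ) (Icc 0 T) :=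
    sol.cont_ux.uncurry_left (f := sol.ux) ℓ (right_mem_Icc.2 hℓ.le)
  calc (∫ t in (0:ℝ)..T, p t * sol.ux 0 t) + (∫ t in (0:ℝ)..T, q t * sol.ux ℓ t)
      = ∫ t in (0:ℝ)..T, (spaceFlux sol adj ℓ t - spaceFlux sol adj 0 t) := by
        refine (intervalIntegral.integral_add ((hp.mul ux_left).intervalIntegrable_of_Icc hT.le)
          ((hq.mul ux_right).intervalIntegrable_of_Icc hT.le)).symm.trans
          (intervalIntegral.integral_congr fun t ht => ?_)
        rw [uIcc_of_le hT.le] at ht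
        simp only [Pi.mul_apply, spaceFlux_left t ht, spaceFlux_right t ht]
        ring
    _ = (∫ x in (0:ℝ)..ℓ, (timeFlux sol adj x T - timeFlux sol adj x 0))
          + ∫ t in (0:ℝ)..T, (spaceFlux sol adj ℓ t - spaceFlux sol adj 0 t) := by
        rw [intervalIntegral.integral_congr_Ioo_of_le hℓ.le (timeFlux_final_sub_initial hT.le),
          intervalIntegral.integral_zero, zero_add]
    _ = ∫ t in (0:ℝ)..T, ∫ x in (0:ℝ)..ℓ, (timeFluxDt sol adj x t + spaceFluxDx sol adj x t) :=
        (integral_integral_add_eq_of_hasDerivAt hℓ.le hT.le (hasDerivAt_timeFlux sol adj)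
          (hasDerivAt_spaceFlux sol adj)
          (continuousOn_timeFluxDt hρA.continuousOn hμ.continuousOn hκ.continuousOn)
          (continuousOn_spaceFluxDx hr.continuousOn hκ.continuousOn)).symm
    _ = ∫ t in (0:ℝ)..T, ∫ x in (0:ℝ)..ℓ, δF x t * adj.φ x t :=
        intervalIntegral.integral_congr_Ioo_of_le hT.le fun t ht =>
          intervalIntegral.integral_congr_Ioo_of_le hℓ.le fun x hx =>
            timeFluxDt_add_spaceFluxDx sol adj x hx t ht

/-- **Integral relationship of Lemma 4.** If `u` is a classical solution of the forward
problem with source `δF` and `φ` is a classical solution of the backward problem with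
boundary inputs `p, q`, then
`∫₀^T p(t) uₓ(0,t) dt + ∫₀^T q(t) uₓ(ℓ,t) dt = ∫₀^T ∫₀^ℓ δF(x,t) φ(x,t) dx dt`. -/
theorem adjoint_integral_relationship
    (ℓ T ρ₀ r₀ κ₀ : ℝ) (hℓ : 0 < ℓ) (hT : 0 < T)
    (hρ₀ : 0 < ρ₀) (hr₀ : 0 < r₀) (hκ₀ : 0 < κ₀)
    (ρA μ Tr r κ : ℝ → ℝ) (δF : ℝ → ℝ → ℝ) (p q : ℝ → ℝ)
    (hρA : ContDiffOn ℝ (⊤ : ℕ∞) ρA (Icc 0 ℓ))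
    (hμ : ContDiffOn ℝ (⊤ : ℕ∞) μ (Icc 0 ℓ))
    (hTr : ContDiffOn ℝ (⊤ : ℕ∞) Tr (Icc 0 ℓ))
    (hr : ContDiffOn ℝ (⊤ : ℕ∞) r (Icc 0 ℓ))
    (hκ : ContDiffOn ℝ (⊤ : ℕ∞) κ (Icc 0 ℓ))
    (hρAb : ∀ x ∈ Icc (0:ℝ) ℓ, ρ₀ ≤ ρA x)
    (hμb : ∀ x ∈ Icc (0:ℝ) ℓ, 0 ≤ μ x)
    (hTrb : ∀ x ∈ Icc (0:ℝ) ℓ, 0 ≤ Tr x)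
    (hrb : ∀ x ∈ Icc (0:ℝ) ℓ, r₀ ≤ r x)
    (hκb : ∀ x ∈ Icc (0:ℝ) ℓ, κ₀ ≤ κ x)
    (hδF : ContinuousOn (fun pt : ℝ × ℝ => δF pt.1 pt.2) (Icc 0 ℓ ×ˢ Icc 0 T))
    (hp : ContinuousOn p (Icc (0:ℝ) T))
    (hq : ContinuousOn q (Icc (0:ℝ) T))
    (sol : ForwardSol ℓ T ρA μ Tr r κ δF)
    (adj : BackwardSol ℓ T ρA μ Tr r κ p q) :
    (∫ t in (0:ℝ)..T, p t * sol.ux 0 t) + (∫ t in (0:ℝ)..T, q t * sol.ux ℓ t)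
      = ∫ t in (0:ℝ)..T, ∫ x in (0:ℝ)..ℓ, δF x t * adj.φ x t :=
  adjoint_integral_relationship_general ℓ T hℓ hT ρA μ Tr r κ δF p q hρA hμ hr hκ hp hq sol adj
end
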